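/- arXiv:1503.04255 — 7 statements merged into one kernel-verified Lean document; each statement's English description precedes it below -/
import Mathlib

section
/- Let c > 0, P_{C,S} ≥ 0, f(P) = exp(-c/(P - P_{C,S})) for P > P_{C,S} and f(P) = 0 otherwise, and let P_a be the larger root of (P - P_{C,S})^2 = cP. Define q(P) = f(P_a)·P/P_a for P ∈ [0, P_a] and q(P) = f(P) for P ≥ P_a. Then q is continuous and concave on [0, ∞), and f(P) ≤ q(P) for all P ≥ 0. -/
/-! `x ↦ exp (-c / x)` is concave on `[c / 2, ∞)` and `Pa - Pcs ≥ c`, so to the right of `Pa`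
the function `q` is concave; to the left it is the tangent line at `Pa`, which passes through the
origin because `(Pa - Pcs) ^ 2 = c Pa`. The glued function is differentiable with antitone
derivative, hence concave. Below `Pa` the ratio `f P / P` increases (by `exp v ≥ 1 + v`), so `f`
stays under that line. -/

open Real Set

lemma hasDerivAt_exp_neg_div (c : ℝ) {x : ℝ} (hx : x ≠ 0) :
    HasDerivAt (fun x ↦ exp (-c / x)) (c / x ^ 2 * exp (-c / x)) x := by
  have h := ((hasDerivAt_inv hx).const_mul (-c)).exp
  simp only [← div_eq_mul_inv] at h
  convert h using 1
  field_simp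

lemma antitoneOn_div_sq_mul_exp_neg_div {c : ℝ} (hc : 0 < c) :
    AntitoneOn (fun x ↦ c / x ^ 2 * exp (-c / x)) (Ici (c / 2)) := by
  intro x hx y hy hxy
  simp only [mem_Ici] at hx hy
  have hx0 : 0 < x := by linarith
  have hy0 : 0 < y := by linarith
  set t := x / y with ht
  have ht0 : 0 ≤ t := by positivity
  -- `t ≤ exp (t - 1)` squared, and `2 (t - 1) ≤ c / y - c / x` because `x ≥ c / 2`.
  have hexp : 2 * (t - 1) ≤ c / y - c / x := by
    have : c / y - c / x - 2 * (t - 1) = (y - x) * (2 * x - c) / (x * y) := by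
      rw [ht]; field_simp; ring
    have : 0 ≤ (y - x) * (2 * x - c) / (x * y) :=
      div_nonneg (mul_nonneg (by linarith) (by linarith)) (by positivity)
    linarith
  have hsq : t ^ 2 ≤ exp (c / y - c / x) :=
    calc t ^ 2 ≤ exp (t - 1) ^ 2 := by
          gcongr; linarith [add_one_le_exp (t - 1)]
      _ = exp (2 * (t - 1)) := by rw [← exp_nat_mul]; norm_num
      _ ≤ exp (c / y - c / x) := exp_le_exp.mpr hexp
  calc c / y ^ 2 * exp (-c / y) = c / x ^ 2 * (t ^ 2 * exp (-c / y)) := by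
        rw [ht]; field_simp
    _ ≤ c / x ^ 2 * (exp (c / y - c / x) * exp (-c / y)) := by gcongr
    _ = c / x ^ 2 * exp (-c / x) := by rw [← exp_add]; ring_nf

lemma exp_neg_div_div_add_le {c s x y : ℝ} (hs : 0 ≤ s) (hx : 0 < x) (hxy : x ≤ y)
    (hy : y ^ 2 ≤ c * (y + s)) :
    exp (-c / x) / (x + s) ≤ exp (-c / y) / (y + s) := by
  have hy0 : 0 < y := hx.trans_le hxy
  have hc : 0 ≤ c := by nlinarith
  -- `c (x + s) - x y` is affine in `x`, and nonnegative at `x = 0` and at `x = y`.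
  have hxy' : x * y ≤ c * (x + s) := by nlinarith [mul_nonneg hc hs]
  have hratio : (y + s) / (x + s) ≤ 1 + (c / x - c / y) := by
    rw [div_le_iff₀ (by positivity)]
    have : (1 + (c / x - c / y)) * (x + s) - (y + s)
        = (y - x) * (c * (x + s) - x * y) / (x * y) := by
      field_simp; ring
    have : 0 ≤ (y - x) * (c * (x + s) - x * y) / (x * y) :=
      div_nonneg (mul_nonneg (by linarith) (by linarith)) (by positivity)
    linarith
  have hexp : (y + s) / (x + s) ≤ exp (c / x - c / y) :=
    hratio.trans (by linarith [add_one_le_exp (c / x - c / y)])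
  rw [div_le_div_iff₀ (by positivity) (by positivity)]
  rw [div_le_iff₀ (by positivity)] at hexp
  calc exp (-c / x) * (y + s) ≤ exp (-c / x) * (exp (c / x - c / y) * (x + s)) := by gcongr
    _ = exp (-c / y) * (x + s) := by rw [← mul_assoc, ← exp_add]; ring_nf

section TangentExtension

variable {q φ φ' : ℝ → ℝ} {a : ℝ}

lemma hasDerivAt_of_eq_tangent_left (hleft : ∀ x ≤ a, q x = φ a + φ' a * (x - a))
    (hright : ∀ x, a ≤ x → q x = φ x) (hφ : ∀ x, a ≤ x → HasDerivAt φ (φ' x) x)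
    (x : ℝ) :
    HasDerivAt q (if x ≤ a then φ' a else φ' x) x := by
  have hline : ∀ x, HasDerivAt (fun y ↦ φ a + φ' a * (y - a)) (φ' a) x := fun x ↦ by
    simpa using ((hasDerivAt_id x).sub_const a).const_mul (φ' a) |>.const_add (φ a)
  rcases lt_trichotomy x a with hxa | rfl | hxa
  · rw [if_pos hxa.le]
    exact (hline x).congr_of_eventuallyEq
      (eventually_lt_nhds hxa |>.mono fun y hy ↦ hleft y hy.le)
  · rw [if_pos le_rfl]
    have hl : HasDerivWithinAt q (φ' x) (Iic x) x :=
      (hline x).hasDerivWithinAt.congr (fun y hy ↦ hleft y hy) (hleft x le_rfl)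
    have hr : HasDerivWithinAt q (φ' x) (Ici x) x :=
      (hφ x le_rfl).hasDerivWithinAt.congr (fun y hy ↦ hright y hy) (hright x le_rfl)
    simpa [Iic_union_Ici] using hl.union hr
  · rw [if_neg hxa.not_ge]
    exact (hφ x hxa.le).congr_of_eventuallyEq
      (eventually_gt_nhds hxa |>.mono fun y hy ↦ hright y hy.le)

lemma concaveOn_univ_of_eq_tangent_left (hleft : ∀ x ≤ a, q x = φ a + φ' a * (x - a))
    (hright : ∀ x, a ≤ x → q x = φ x) (hφ : ∀ x, a ≤ x → HasDerivAt φ (φ' x) x)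
    (hφ' : AntitoneOn φ' (Ici a)) :
    ConcaveOn ℝ univ q := by
  have hq := hasDerivAt_of_eq_tangent_left hleft hright hφ
  refine Antitone.concaveOn_univ_of_deriv (fun x ↦ (hq x).differentiableAt) fun x y hxy ↦ ?_
  rw [(hq x).deriv, (hq y).deriv]
  split_ifs with hya hxa hxa
  · exact le_rfl
  · exact absurd (hxy.trans hya) hxa
  · exact hφ' self_mem_Ici (not_le.mp hya).le (not_le.mp hya).le
  · exact hφ' (not_le.mp hxa).le (not_le.mp hya).le hxy

end TangentExtension

lemma larger_root_spec {c s r : ℝ} (hc : 0 ≤ c) (hs : 0 ≤ s)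
    (hr : r = ((2 * s + c) + √c * √(4 * s + c)) / 2) :
    (r - s) ^ 2 = c * r ∧ c ≤ r - s := by
  have hc' : √c ^ 2 = c := sq_sqrt hc
  have hs' : √(4 * s + c) ^ 2 = 4 * s + c := sq_sqrt (by linarith)
  have hcs : c ≤ √c * √(4 * s + c) := by
    calc c = √c * √c := (mul_self_sqrt hc).symm
      _ ≤ √c * √(4 * s + c) := by gcongr; linarith
  subst hr
  exact ⟨by linear_combination (√(4 * s + c) ^ 2 / 4) * hc' + (c / 4) * hs', by linarith⟩

/-- The concave envelope q of f (tangent line from the origin up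
to Pa, then f) is continuous and concave on [0, ∞), and f ≤ q there. -/
theorem stmt3 (c Pcs : ℝ) (hc : 0 < c) (hPcs : 0 ≤ Pcs)
    (f : ℝ → ℝ)
    (hf : ∀ P : ℝ, f P = if Pcs < P then Real.exp (-c / (P - Pcs)) else 0)
    (Pa : ℝ)
    (hPa : Pa = ((2 * Pcs + c) + Real.sqrt c * Real.sqrt (4 * Pcs + c)) / 2)
    (q : ℝ → ℝ)
    (hq : ∀ P : ℝ, q P = if P ≤ Pa then f Pa * P / Pa else f P) :
    ContinuousOn q (Set.Ici 0) ∧ ConcaveOn ℝ (Set.Ici 0) q ∧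
    ∀ P : ℝ, 0 ≤ P → f P ≤ q P := by
  obtain ⟨hroot, hcPa⟩ := larger_root_spec hc.le hPcs hPa
  have hPa0 : 0 < Pa := by linarith
  set φ : ℝ → ℝ := fun P ↦ exp (-c / (P - Pcs))
  set φ' : ℝ → ℝ := fun P ↦ c / (P - Pcs) ^ 2 * exp (-c / (P - Pcs))
  have hfPa : f Pa = φ Pa := by rw [hf, if_pos (by linarith)]
  have hleft : ∀ P ≤ Pa, q P = φ Pa + φ' Pa * (P - Pa) := fun P hP ↦ by
    simp only [hq, if_pos hP, hfPa, φ, φ', hroot]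
    field_simp
    ring
  have hright : ∀ P, Pa ≤ P → q P = φ P := fun P hP ↦ by
    rcases hP.eq_or_lt with rfl | hP
    · rw [hq, if_pos le_rfl, hfPa]; field_simp
    · rw [hq, if_neg hP.not_ge, hf, if_pos (by linarith)]
  have hφ : ∀ P, Pa ≤ P → HasDerivAt φ (φ' P) P := fun P hP ↦
    (hasDerivAt_exp_neg_div c (by linarith)).comp_sub_const P Pcs
  have hφ' : AntitoneOn φ' (Ici Pa) := fun x (hx : Pa ≤ x) y (hy : Pa ≤ y) hxy ↦
    antitoneOn_div_sq_mul_exp_neg_div hc (show c / 2 ≤ x - Pcs by linarith)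
      (show c / 2 ≤ y - Pcs by linarith) (by linarith)
  have hderiv := hasDerivAt_of_eq_tangent_left hleft hright hφ
  refine ⟨fun P _ ↦ (hderiv P).continuousAt.continuousWithinAt,
    (concaveOn_univ_of_eq_tangent_left hleft hright hφ hφ').subset (subset_univ _) (convex_Ici 0),
    fun P hP ↦ ?_⟩
  rcases le_or_gt P Pa with hPPa | hPPa
  · rw [hq, if_pos hPPa, hfPa, hf]
    split_ifs with hPcsP
    · have h := exp_neg_div_div_add_le hPcs (sub_pos.2 hPcsP) (sub_le_sub_right hPPa Pcs)
        (by rw [hroot, sub_add_cancel])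
      rw [sub_add_cancel, sub_add_cancel, div_le_div_iff₀ (by linarith) hPa0] at h
      rw [le_div_iff₀ hPa0]
      linarith
    · positivity
  · rw [hq, if_neg hPPa.not_ge]
end

section
/- Let N_{t+1} = N_t - 1_{N_t ≥ 1} + n_t with N_1 = 0, where n_t = ⌊(E_source^t + E_t)/P_S⌋ and E_source^{t+1} = E_source^t - n_t·P_S + E_t with E_source^1 = 0. If B_1 = 0 and B_{t+1} = B_t - P_S·1_{B_t ≥ P_S} + E_t, then for all t ≥ 1, N_t = ⌊B_t / P_S⌋. -/
/-! The source buffer always holds the fractional part of the battery: by induction,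
`N t = ⌊B t / P_S⌋` and `E_source^t = B t - N t * P_S`. Since `N t ≥ 1` exactly when
`B t ≥ P_S`, queue and battery release a packet at the same steps, and then
`n t = ⌊(B t + E t) / P_S⌋ - N t`. -/

lemma Int.floor_sub_intCast_mul_div {p : ℝ} (hp : p ≠ 0) (y : ℝ) (k : ℤ) :
    ⌊(y - k * p) / p⌋ = ⌊y / p⌋ - k := by
  rw [sub_div, mul_div_cancel_right₀ _ hp, Int.floor_sub_intCast]

lemma Int.one_le_floor_div_iff {p : ℝ} (hp : 0 < p) (x : ℝ) : 1 ≤ ⌊x / p⌋ ↔ p ≤ x := by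
  rw [Int.le_floor, le_div_iff₀ hp, Int.cast_one, one_mul]

/-- One step of the recursion preserves the invariant `q = ⌊b / p⌋`, `s = b - q * p`
relating queue length `q`, battery level `b` and source buffer `s`. -/
lemma queue_battery_step {p : ℝ} (hp : 0 < p) {b e s : ℝ} {q : ℤ}
    (hq : q = ⌊b / p⌋) (hs : s = b - q * p) :
    q - (if 1 ≤ q then 1 else 0) + ⌊(s + e) / p⌋ = ⌊(b - (if p ≤ b then p else 0) + e) / p⌋ ∧
      s - (⌊(s + e) / p⌋ : ℝ) * p + e =
        b - (if p ≤ b then p else 0) + e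
          - ((q - (if 1 ≤ q then 1 else 0) + ⌊(s + e) / p⌋ : ℤ) : ℝ) * p := by
  set k : ℤ := if 1 ≤ q then 1 else 0
  have hrelease : (if p ≤ b then p else 0) = (k : ℝ) * p := by
    simp only [k, hq, Int.one_le_floor_div_iff hp]
    split_ifs <;> simp
  have hadmit : ⌊(s + e) / p⌋ = ⌊(b + e) / p⌋ - q := by
    rw [← Int.floor_sub_intCast_mul_div hp.ne', hs]
    ring_nf
  have hbattery : b - (if p ≤ b then p else 0) + e = (b + e) - k * p := by
    rw [hrelease]; ring
  refine ⟨?_, ?_⟩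
  · rw [hbattery, Int.floor_sub_intCast_mul_div hp.ne', hadmit]
    ring
  · rw [hbattery, hadmit, hs]
    push_cast
    ring

theorem stmt6_general (PS : ℝ) (hPS : 0 < PS)
    (E : ℕ → ℝ)
    (Esource : ℕ → ℝ) (n : ℕ → ℤ) (N : ℕ → ℤ) (B : ℕ → ℝ)
    (hEs1 : Esource 1 = 0)
    (hn : ∀ t, n t = ⌊(Esource t + E t) / PS⌋)
    (hEs : ∀ t, 1 ≤ t → Esource (t + 1) = Esource t - (n t : ℝ) * PS + E t)
    (hN1 : N 1 = 0)
    (hN : ∀ t, 1 ≤ t → N (t + 1) = N t - (if 1 ≤ N t then 1 else 0) + n t)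
    (hB1 : B 1 = 0)
    (hB : ∀ t, 1 ≤ t → B (t + 1) = B t - (if PS ≤ B t then PS else 0) + E t) :
    ∀ t, 1 ≤ t → N t = ⌊B t / PS⌋ := by
  have invariant : ∀ t, 1 ≤ t → N t = ⌊B t / PS⌋ ∧ Esource t = B t - N t * PS := by
    intro t ht
    induction t, ht using Nat.le_induction with
    | base => simp [hN1, hB1, hEs1]
    | succ t ht ih =>
      rw [hN t ht, hB t ht, hEs t ht, hn t]
      exact queue_battery_step hPS ih.1 ih.2
  exact fun t ht => (invariant t ht).1

/-- Energy-packet queue identity N_t = ⌊B_t / P_S⌋ for all t ≥ 1,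
where n_t = ⌊(E_source^t + E_t)/P_S⌋, E_source^{t+1} = E_source^t - n_t P_S + E_t,
N_{t+1} = N_t - 1_{N_t ≥ 1} + n_t, B_{t+1} = B_t - P_S·1_{B_t ≥ P_S} + E_t,
with N_1 = 0, E_source^1 = 0, B_1 = 0. -/
theorem stmt6 (PS : ℝ) (hPS : 0 < PS)
    (E : ℕ → ℝ) (hE : ∀ t, 0 ≤ E t)
    (Esource : ℕ → ℝ) (n : ℕ → ℤ) (N : ℕ → ℤ) (B : ℕ → ℝ)
    (hEs1 : Esource 1 = 0)
    (hn : ∀ t, n t = ⌊(Esource t + E t) / PS⌋)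
    (hEs : ∀ t, 1 ≤ t → Esource (t + 1) = Esource t - (n t : ℝ) * PS + E t)
    (hN1 : N 1 = 0)
    (hN : ∀ t, 1 ≤ t → N (t + 1) = N t - (if 1 ≤ N t then 1 else 0) + n t)
    (hB1 : B 1 = 0)
    (hB : ∀ t, 1 ≤ t → B (t + 1) = B t - (if PS ≤ B t then PS else 0) + E t) :
    ∀ t, 1 ≤ t → N t = ⌊B t / PS⌋ :=
  stmt6_general PS hPS E Esource n N B hEs1 hn hEs hN1 hN hB1 hB
end

section
/- Let c > 0, P_{C,S} ≥ 0, λ_S > 0, λ_D > 0, P_D > 0. Define φ(P_S) = exp(-c/(P_S - P_{C,S})) · min(1, λ_S/P_S, λ_D/P_D, λ_S λ_D/(P_S P_D)) for P_S > P_{C,S}. Then φ is maximized over P_S > P_{C,S} at P_S* = max(λ_S, B_th), where B_th = (1/2)[(2P_{C,S} + c) + c^{1/2}(4P_{C,S} + c)^{1/2}]. -/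
private lemma minprod (a d : ℝ) (ha : 0 < a) (hd : 0 < d) :
    min (min 1 a) (min d (a * d)) = min 1 a * min 1 d := by
  rcases le_total 1 a with h1 | h1 <;> rcases le_total 1 d with h2 | h2
  · rw [min_eq_left h1, min_eq_left (show d ≤ a * d by nlinarith),
      min_eq_left h2, mul_one]
  · rw [min_eq_left h1, min_eq_left (show d ≤ a * d by nlinarith),
      min_eq_right h2, one_mul]
  · rw [min_eq_right h1, min_eq_right (show a * d ≤ d by nlinarith),
      min_eq_left h2, mul_one, min_eq_left (show a ≤ a * d by nlinarith)]
  · rw [min_eq_right h1, min_eq_right (show a * d ≤ d by nlinarith),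
      min_eq_right h2, min_eq_right (show a * d ≤ a by nlinarith)]

/-- Theorem 2: φ(P_S) = exp(-c/(P_S-Pcs))·min(1, λ_S/P_S,
λ_D/P_D, λ_Sλ_D/(P_SP_D)) is maximized over P_S > Pcs at
P_S* = max(λ_S, B_th). -/
theorem stmt10 (c Pcs lamS lamD PD : ℝ)
    (hc : 0 < c) (hPcs : 0 ≤ Pcs) (hlS : 0 < lamS) (hlD : 0 < lamD)
    (hPD : 0 < PD)
    (phi : ℝ → ℝ)
    (hphi : ∀ P : ℝ, Pcs < P → phi P = Real.exp (-c / (P - Pcs)) *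
      min (min 1 (lamS / P)) (min (lamD / PD) (lamS * lamD / (P * PD))))
    (Bth : ℝ)
    (hBth : Bth = ((2 * Pcs + c) + Real.sqrt c * Real.sqrt (4 * Pcs + c)) / 2) :
    Pcs < max lamS Bth ∧ ∀ P : ℝ, Pcs < P → phi P ≤ phi (max lamS Bth) := by
  have hs2 : (Real.sqrt c * Real.sqrt (4 * Pcs + c)) ^ 2 = c * (4 * Pcs + c) := by
    rw [mul_pow, Real.sq_sqrt hc.le, Real.sq_sqrt (by linarith)]
  have hsnn : 0 ≤ Real.sqrt c * Real.sqrt (4 * Pcs + c) := by positivity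
  have hPB : Pcs < Bth := by rw [hBth]; nlinarith
  have hBpos : 0 < Bth := lt_of_le_of_lt hPcs hPB
  have hbB : (Bth - Pcs) ^ 2 = c * Bth := by
    rw [hBth]; linear_combination hs2 / 4
  have hb : 0 < Bth - Pcs := by linarith
  -- h(P) = exp(-c/(P-Pcs))/P is maximized at Bth
  have hmax : ∀ P : ℝ, Pcs < P →
      Bth * Real.exp (-c / (P - Pcs)) ≤ P * Real.exp (-c / (Bth - Pcs)) := by
    intro P hP
    have hPpos : 0 < P := lt_of_le_of_lt hPcs hP
    have hp : 0 < P - Pcs := by linarith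
    have hlog : Real.log (Bth / P) ≤ Bth / P - 1 :=
      Real.log_le_sub_one_of_pos (by positivity)
    rw [Real.log_div hBpos.ne' hPpos.ne'] at hlog
    have h2 : c / (Bth - Pcs) - c / (P - Pcs) ≤ 1 - Bth / P := by
      rw [div_sub_div _ _ hb.ne' hp.ne',
        show (1 : ℝ) - Bth / P = (P - Bth) / P by field_simp,
        div_le_div_iff₀ (by positivity) hPpos]
      have hid : Bth * ((P - Bth) * ((Bth - Pcs) * (P - Pcs))
          - (c * (P - Pcs) - (Bth - Pcs) * c) * P)
          = (Bth - Pcs) * Pcs * (P - Bth) ^ 2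
            + ((Bth - Pcs) ^ 2 - c * Bth) * ((P - Bth) * P) := by ring
      have h4 : 0 ≤ Bth * ((P - Bth) * ((Bth - Pcs) * (P - Pcs))
          - (c * (P - Pcs) - (Bth - Pcs) * c) * P) := by
        rw [hid, hbB, sub_self, zero_mul, add_zero]
        exact mul_nonneg (mul_nonneg hb.le hPcs) (sq_nonneg _)
      nlinarith [h4, hBpos]
    have h3 : Real.log Bth + -c / (P - Pcs) ≤ Real.log P + -c / (Bth - Pcs) := by
      rw [neg_div, neg_div]; linarith
    calc Bth * Real.exp (-c / (P - Pcs))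
        = Real.exp (Real.log Bth + -c / (P - Pcs)) := by
          rw [Real.exp_add, Real.exp_log hBpos]
      _ ≤ Real.exp (Real.log P + -c / (Bth - Pcs)) := Real.exp_le_exp.2 h3
      _ = P * Real.exp (-c / (Bth - Pcs)) := by
          rw [Real.exp_add, Real.exp_log hPpos]
  -- h is decreasing past Bth
  have hdec : ∀ Q P : ℝ, Bth ≤ Q → Q ≤ P →
      Q * Real.exp (-c / (P - Pcs)) ≤ P * Real.exp (-c / (Q - Pcs)) := by
    intro Q P hBQ hQP
    have hQpos : 0 < Q := lt_of_lt_of_le hBpos hBQ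
    have hPpos : 0 < P := lt_of_lt_of_le hQpos hQP
    have hq : 0 < Q - Pcs := by linarith
    have hp : 0 < P - Pcs := by linarith
    have hlog : Real.log (Q / P) ≤ Q / P - 1 :=
      Real.log_le_sub_one_of_pos (by positivity)
    rw [Real.log_div hQpos.ne' hPpos.ne'] at hlog
    have h2 : c / (Q - Pcs) - c / (P - Pcs) ≤ 1 - Q / P := by
      rw [div_sub_div _ _ hq.ne' hp.ne',
        show (1 : ℝ) - Q / P = (P - Q) / P by field_simp,
        div_le_div_iff₀ (by positivity) hPpos]
      have hid : Bth * ((P - Q) * ((Q - Pcs) * (P - Pcs))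
          - (c * (P - Pcs) - (Q - Pcs) * c) * P)
          = (P - Q) * (Bth * (P - Pcs) * (Q - Bth) + (Bth - Pcs) * Pcs * (P - Bth))
            + ((Bth - Pcs) ^ 2 - c * Bth) * ((P - Q) * P) := by ring
      have hnn : 0 ≤ (P - Q) * (Bth * (P - Pcs) * (Q - Bth)
          + (Bth - Pcs) * Pcs * (P - Bth)) := by
        apply mul_nonneg (by linarith)
        have h1 : 0 ≤ Bth * (P - Pcs) * (Q - Bth) := by
          apply mul_nonneg (mul_nonneg hBpos.le hp.le); linarith
        have h2 : 0 ≤ (Bth - Pcs) * Pcs * (P - Bth) := by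
          apply mul_nonneg (mul_nonneg hb.le hPcs); linarith
        linarith
      have h4 : 0 ≤ Bth * ((P - Q) * ((Q - Pcs) * (P - Pcs))
          - (c * (P - Pcs) - (Q - Pcs) * c) * P) := by
        rw [hid, hbB, sub_self, zero_mul, add_zero]; exact hnn
      nlinarith [h4, hBpos]
    have h3 : Real.log Q + -c / (P - Pcs) ≤ Real.log P + -c / (Q - Pcs) := by
      rw [neg_div, neg_div]; linarith
    calc Q * Real.exp (-c / (P - Pcs))
        = Real.exp (Real.log Q + -c / (P - Pcs)) := by
          rw [Real.exp_add, Real.exp_log hQpos]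
      _ ≤ Real.exp (Real.log P + -c / (Q - Pcs)) := Real.exp_le_exp.2 h3
      _ = P * Real.exp (-c / (Q - Pcs)) := by
          rw [Real.exp_add, Real.exp_log hPpos]
  set M := max lamS Bth with hM
  have hPM : Pcs < M := lt_of_lt_of_le hPB (le_max_right _ _)
  have hMpos : 0 < M := lt_of_le_of_lt hPcs hPM
  refine ⟨hPM, fun P hP => ?_⟩
  have hPpos : 0 < P := lt_of_le_of_lt hPcs hP
  -- the core inequality for g(P) = exp(-c/(P-Pcs)) * min 1 (lamS/P)
  have hg : Real.exp (-c / (P - Pcs)) * min 1 (lamS / P)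
      ≤ Real.exp (-c / (M - Pcs)) * min 1 (lamS / M) := by
    rcases le_total lamS Bth with hcase | hcase
    · -- M = Bth
      have hMB : M = Bth := max_eq_right hcase
      rw [hMB, min_eq_right ((div_le_one hBpos).2 hcase)]
      have key := hmax P hP
      rcases le_total lamS P with hLP | hLP
      · rw [min_eq_right ((div_le_one hPpos).2 hLP), mul_div_assoc', mul_div_assoc',
          div_le_div_iff₀ hPpos hBpos]
        nlinarith [mul_le_mul_of_nonneg_left key hlS.le]
      · have step1 : Real.exp (-c / (P - Pcs)) * min 1 (lamS / P)
            ≤ Real.exp (-c / (P - Pcs)) :=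
          mul_le_of_le_one_right (Real.exp_pos _).le (min_le_left _ _)
        have step2 : Real.exp (-c / (P - Pcs)) ≤ Real.exp (-c / (Bth - Pcs)) * (lamS / Bth) := by
          rw [mul_div_assoc', le_div_iff₀ hBpos]
          nlinarith [key, mul_le_mul_of_nonneg_right hLP (Real.exp_pos (-c / (Bth - Pcs))).le]
        linarith
    · -- M = lamS
      have hML : M = lamS := max_eq_left hcase
      have hPl : Pcs < lamS := lt_of_lt_of_le hPB hcase
      rw [hML, div_self hlS.ne', min_self, mul_one]
      rcases le_total P lamS with hLP | hLP
      · have step1 : Real.exp (-c / (P - Pcs)) * min 1 (lamS / P)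
            ≤ Real.exp (-c / (P - Pcs)) :=
          mul_le_of_le_one_right (Real.exp_pos _).le (min_le_left _ _)
        have hmono : Real.exp (-c / (P - Pcs)) ≤ Real.exp (-c / (lamS - Pcs)) := by
          apply Real.exp_le_exp.2
          rw [neg_div, neg_div, neg_le_neg_iff]
          apply div_le_div_of_nonneg_left hc.le (by linarith) (by linarith)
        linarith
      · rw [min_eq_right ((div_le_one hPpos).2 hLP), mul_div_assoc', div_le_iff₀ hPpos]
        have := hdec lamS P hcase hLP
        nlinarith [this]
  -- assemble
  rw [hphi P hP, hphi M hPM,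
    show lamS * lamD / (P * PD) = (lamS / P) * (lamD / PD) by rw [div_mul_div_comm],
    show lamS * lamD / (M * PD) = (lamS / M) * (lamD / PD) by rw [div_mul_div_comm],
    minprod _ _ (by positivity) (by positivity),
    minprod _ _ (by positivity) (by positivity),
    ← mul_assoc, ← mul_assoc]
  exact mul_le_mul_of_nonneg_right hg (le_min zero_le_one (by positivity))
end

section
/- Under the joint threshold-based policy (both nodes act only when simultaneously B_S^t ≥ P_S and B_D^t ≥ P_D), with infinite batteries and stationary ergodic energy arrivals with means λ_S, λ_D, the simultaneous transmit-and-receive probability satisfies Ψ(P_S, P_D) ≤ min(λ_S/P_S, λ_D/P_D), and if max(λ_S/P_S, λ_D/P_D) < 1 then Ψ(P_S, P_D) = min(λ_S/P_S, λ_D/P_D). -/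
/-!
Write `X n`, `Y n` for the energy harvested in the first `n` slots and `N n` for the number of
slots among them in which both nodes transmit. Energy conservation says that the batteries are
`X n - P_S N n ≥ 0` and `Y n - P_D N n ≥ 0`, so `N n ≤ min (n, X n / P_S, Y n / P_D)`.
Conversely, if `b < n` is the last slot in which the nodes stayed silent, one battery was below
its threshold at `b` and the nodes transmitted in every later slot, so
`N n ≥ min (X b / P_S, Y b / P_D) + (n - b) - 2`. By Birkhoff's ergodic theorem, obtained from
Garsia's maximal inequality, `X n / n → λ_S` and `Y n / n → λ_D` almost surely, and the two
bounds squeeze `N n / n` to `Ψ = min (1, λ_S / P_S, λ_D / P_D)`; bounded convergence passes this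
to the expectations. The cap `1` is inactive as soon as `max (λ_S / P_S, λ_D / P_D) < 1`.
-/

open MeasureTheory Filter Finset Topology

lemma eventually_div_lt_of_forall_rat_gt {s : ℕ → ℝ} {m a : ℝ}
    (h : ∀ q : ℚ, m < q → ∃ C, ∀ n, s n ≤ n * q + C) (ha : m < a) :
    ∀ᶠ n : ℕ in atTop, s n / n < a := by
  obtain ⟨q, hmq, hqa⟩ := exists_rat_btwn ha
  obtain ⟨C, hC⟩ := h q hmq
  filter_upwards [tendsto_natCast_atTop_atTop.eventually_gt_atTop (C / (a - q)),
    eventually_gt_atTop 0] with n hn hn0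
  rw [div_lt_iff₀ (by exact_mod_cast hn0)]
  rw [div_lt_iff₀ (sub_pos.2 hqa)] at hn
  linarith [hC n]

lemma tendsto_div_min_one_of_reflection_bound {N Z : ℕ → ℝ} {r c : ℝ}
    (hZ : Tendsto (fun n => Z n / n) atTop (𝓝 r)) (hN0 : ∀ n, 0 ≤ N n) (hNn : ∀ n, N n ≤ n)
    (hNZ : ∀ n, N n ≤ Z n) (hlow : ∀ n : ℕ, ∃ b ≤ n, Z b + (n - b) ≤ N n + c) :
    Tendsto (fun n => N n / n) atTop (𝓝 (min 1 r)) := by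
  refine tendsto_order.2 ⟨fun a ha => ?_, fun a ha => ?_⟩
  · obtain ⟨a', haa', ha'⟩ := exists_between ha
    have ha'1 : a' ≤ 1 := ha'.le.trans (min_le_left 1 r)
    obtain ⟨K, hK⟩ : ∃ K : ℕ, ∀ b ≥ K, a' * b ≤ Z b := by
      refine eventually_atTop.1 ?_
      filter_upwards [hZ.eventually (eventually_gt_nhds
        (ha'.trans_le (min_le_right 1 r))), eventually_gt_atTop 0] with b hb hb0
      exact ((lt_div_iff₀ (by exact_mod_cast hb0)).1 hb).le
    have hlin : ∀ n : ℕ, a' * n - (K + c) ≤ N n := by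
      intro n
      obtain ⟨b, hbn, hb⟩ := hlow n
      have hbn' : (b : ℝ) ≤ n := by exact_mod_cast hbn
      have hslack : 0 ≤ (1 - a') * (n - b) := mul_nonneg (by linarith) (by linarith)
      rcases lt_or_ge b K with hbK | hbK
      · have hbK' : (b : ℝ) ≤ K := by exact_mod_cast hbK.le
        linarith [hN0 b, hNZ b, mul_nonneg (sub_nonneg.2 ha'1) (b.cast_nonneg : (0 : ℝ) ≤ b)]
      · linarith [hK b hbK, K.cast_nonneg (α := ℝ)]
    filter_upwards [tendsto_natCast_atTop_atTop.eventually_gt_atTop ((K + c) / (a' - a)),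
      eventually_gt_atTop 0] with n hn hn0
    rw [div_lt_iff₀ (by linarith)] at hn
    rw [lt_div_iff₀ (by exact_mod_cast hn0)]
    linarith [hlin n]
  · have hmin : Tendsto (fun n => min 1 (Z n / n)) atTop (𝓝 (min 1 r)) :=
      tendsto_const_nhds.min hZ
    filter_upwards [hmin.eventually (eventually_lt_nhds ha)] with n hn
    refine lt_of_le_of_lt (le_min ?_ ?_) hn
    · exact div_le_one_of_le₀ (hNn n) n.cast_nonneg
    · exact div_le_div_of_nonneg_right (hNZ n) n.cast_nonneg

section Birkhoff

variable {Ω : Type*} {T : Ω → Ω} {g : Ω → ℝ}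

/-- `birkhoffMax T g n ω = max_{k ≤ n} birkhoffSum T g k ω`. -/
def birkhoffMax (T : Ω → Ω) (g : Ω → ℝ) : ℕ → Ω → ℝ
  | 0 => 0
  | n + 1 => fun ω => max 0 (g ω + birkhoffMax T g n (T ω))

lemma birkhoffMax_nonneg : ∀ n ω, 0 ≤ birkhoffMax T g n ω
  | 0, _ => le_rfl
  | _ + 1, _ => le_max_left _ _

lemma birkhoffMax_le_succ : ∀ n ω, birkhoffMax T g n ω ≤ birkhoffMax T g (n + 1) ω
  | 0, _ => le_max_left _ _
  | n + 1, ω => max_le_max le_rfl ((add_le_add_iff_left _).2 (birkhoffMax_le_succ n (T ω)))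

lemma birkhoffSum_le_birkhoffMax : ∀ n ω, birkhoffSum T g n ω ≤ birkhoffMax T g n ω
  | 0, _ => le_rfl
  | n + 1, ω => by
    rw [birkhoffSum_succ']
    exact le_max_of_le_right ((add_le_add_iff_left _).2 (birkhoffSum_le_birkhoffMax n (T ω)))

lemma birkhoffMax_sub_comp_le_indicator (n : ℕ) (ω : Ω) :
    birkhoffMax T g (n + 1) ω - birkhoffMax T g (n + 1) (T ω) ≤
      {ω | 0 < birkhoffMax T g (n + 1) ω}.indicator g ω := by
  by_cases hω : ω ∈ {ω | 0 < birkhoffMax T g (n + 1) ω}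
  · have hmax : birkhoffMax T g (n + 1) ω = g ω + birkhoffMax T g n (T ω) :=
      max_eq_right (lt_max_iff.1 hω |>.resolve_left (lt_irrefl 0)).le
    rw [Set.indicator_of_mem hω, hmax]
    linarith [birkhoffMax_le_succ (T := T) (g := g) n (T ω)]
  · rw [Set.indicator_of_notMem hω]
    rw [Set.mem_ofPred_eq, not_lt] at hω
    linarith [birkhoffMax_nonneg (T := T) (g := g) (n + 1) (T ω)]

lemma preimage_unbounded_birkhoffSum :
    T ⁻¹' {ω | ∀ C : ℝ, ∃ n, C < birkhoffSum T g n ω} =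
      {ω | ∀ C : ℝ, ∃ n, C < birkhoffSum T g n ω} := by
  ext ω
  simp only [Set.mem_preimage, Set.mem_ofPred_eq]
  refine ⟨fun h C => ?_, fun h C => ?_⟩
  · obtain ⟨n, hn⟩ := h (C - g ω)
    exact ⟨n + 1, by rw [birkhoffSum_succ']; linarith⟩
  · obtain ⟨n, hn⟩ := h (max (C + g ω) 0)
    rcases n with _ | n
    · exact absurd hn (not_lt.2 (le_max_right _ _))
    · rw [birkhoffSum_succ'] at hn
      exact ⟨n, by linarith [le_max_left (C + g ω) 0]⟩

variable [MeasurableSpace Ω] {μ : Measure Ω}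

lemma measurable_birkhoffMax (hT : Measurable T) (hg : Measurable g) :
    ∀ n, Measurable (birkhoffMax T g n)
  | 0 => measurable_const
  | n + 1 => measurable_const.max (hg.add ((measurable_birkhoffMax hT hg n).comp hT))

lemma integrable_birkhoffMax (hT : MeasurePreserving T μ μ) (hgm : Measurable g)
    (hg : Integrable g μ) : ∀ n, Integrable (birkhoffMax T g n) μ
  | 0 => integrable_zero _ _ _
  | n + 1 => (integrable_zero _ _ _).sup
      (hg.add (hT.integrable_comp_of_integrable (integrable_birkhoffMax hT hgm hg n)))

/-- The maximal ergodic theorem, after Garsia. -/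
theorem setIntegral_birkhoffMax_pos_nonneg (hT : MeasurePreserving T μ μ) (hgm : Measurable g)
    (hg : Integrable g μ) (n : ℕ) :
    0 ≤ ∫ ω in {ω | 0 < birkhoffMax T g (n + 1) ω}, g ω ∂μ := by
  have hM := measurable_birkhoffMax hT.measurable hgm (n + 1)
  have hMi := integrable_birkhoffMax hT hgm hg (n + 1)
  have hMTi : Integrable (fun ω => birkhoffMax T g (n + 1) (T ω)) μ :=
    hT.integrable_comp_of_integrable hMi
  have hinv : ∫ ω, birkhoffMax T g (n + 1) (T ω) ∂μ = ∫ ω, birkhoffMax T g (n + 1) ω ∂μ := by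
    rw [← integral_map hT.aemeasurable (hT.map_eq ▸ hM.aestronglyMeasurable), hT.map_eq]
  have hE : MeasurableSet {ω | 0 < birkhoffMax T g (n + 1) ω} :=
    measurableSet_lt measurable_const hM
  calc (0 : ℝ) = ∫ ω, (birkhoffMax T g (n + 1) ω - birkhoffMax T g (n + 1) (T ω)) ∂μ := by
        rw [integral_sub hMi hMTi, hinv, sub_self]
    _ ≤ ∫ ω, {ω | 0 < birkhoffMax T g (n + 1) ω}.indicator g ω ∂μ :=
        integral_mono (hMi.sub hMTi) (hg.indicator hE) (birkhoffMax_sub_comp_le_indicator n)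
    _ = _ := integral_indicator hE

theorem integral_nonneg_of_ae_unbounded_birkhoffSum (hT : MeasurePreserving T μ μ)
    (hgm : Measurable g) (hg : Integrable g μ)
    (hunb : ∀ᵐ ω ∂μ, ∀ C, ∃ n, C < birkhoffSum T g n ω) : 0 ≤ ∫ ω, g ω ∂μ := by
  set E : ℕ → Set Ω := fun n => {ω | 0 < birkhoffMax T g (n + 1) ω}
  have hEm : ∀ n, MeasurableSet (E n) := fun n =>
    measurableSet_lt measurable_const (measurable_birkhoffMax hT.measurable hgm (n + 1))
  have hEmono : Monotone E := fun m n hmn ω (hω : 0 < _) =>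
    hω.trans_le (monotone_nat_of_le_succ (fun k => birkhoffMax_le_succ k ω) (by omega))
  have hfull : ∀ᵐ ω ∂μ, ω ∈ ⋃ n, E n := by
    filter_upwards [hunb] with ω hω
    obtain ⟨n, hn⟩ := hω 0
    have hpos := hn.trans_le (birkhoffSum_le_birkhoffMax n ω)
    rcases n with _ | k
    · exact absurd hpos (lt_irrefl 0)
    · exact Set.mem_iUnion.2 ⟨k, hpos⟩
  have hlim := tendsto_setIntegral_of_monotone hEm hEmono hg.integrableOn
  rw [Measure.restrict_eq_self_of_ae_mem hfull] at hlim
  exact ge_of_tendsto' hlim fun n => setIntegral_birkhoffMax_pos_nonneg hT hgm hg n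

lemma measurableSet_unbounded_birkhoffSum (hT : Measurable T) (hgm : Measurable g) :
    MeasurableSet {ω | ∀ C : ℝ, ∃ n, C < birkhoffSum T g n ω} := by
  have hS : ∀ n, Measurable (birkhoffSum T g n) := fun n =>
    Finset.measurable_sum _ fun k _ => hgm.comp (hT.iterate k)
  have : {ω | ∀ C : ℝ, ∃ n, C < birkhoffSum T g n ω} =
      ⋂ k : ℕ, ⋃ n, {ω | (k : ℝ) < birkhoffSum T g n ω} := by
    ext ω
    simp only [Set.mem_ofPred_eq, Set.mem_iInter, Set.mem_iUnion]
    refine ⟨fun h k => h k, fun h C => ?_⟩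
    obtain ⟨k, hk⟩ := exists_nat_gt C
    obtain ⟨n, hn⟩ := h k
    exact ⟨n, hk.trans hn⟩
  rw [this]
  exact .iInter fun k => .iUnion fun n => measurableSet_lt measurable_const (hS n)

theorem ae_bddAbove_birkhoffSum (hT : Ergodic T μ) (hgm : Measurable g) (hg : Integrable g μ)
    (hneg : ∫ ω, g ω ∂μ < 0) : ∀ᵐ ω ∂μ, ∃ C, ∀ n, birkhoffSum T g n ω ≤ C := by
  rcases hT.ae_empty_or_univ (measurableSet_unbounded_birkhoffSum hT.measurable hgm)
    preimage_unbounded_birkhoffSum with h | h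
  · filter_upwards [measure_eq_zero_iff_ae_notMem.1 (ae_eq_empty.1 h)] with ω hω
    simpa using hω
  · have := integral_nonneg_of_ae_unbounded_birkhoffSum hT.toMeasurePreserving hgm hg
      (mem_ae_iff.2 (ae_eq_univ.1 h))
    linarith

lemma ae_forall_rat_gt_birkhoffSum_le [IsProbabilityMeasure μ] (hT : Ergodic T μ)
    (hgm : Measurable g) (hg : Integrable g μ) :
    ∀ᵐ ω ∂μ, ∀ q : ℚ, ∫ ω, g ω ∂μ < q → ∃ C, ∀ n, birkhoffSum T g n ω ≤ n * q + C := by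
  rw [ae_all_iff]
  intro q
  by_cases hq : ∫ ω, g ω ∂μ < q
  · filter_upwards [ae_bddAbove_birkhoffSum hT (hgm.sub measurable_const)
      (hg.sub (integrable_const (q : ℝ))) (by simp [integral_sub hg (integrable_const _), hq])]
      with ω ⟨C, hC⟩ _
    refine ⟨C, fun n => ?_⟩
    have hsum : birkhoffSum T (g - fun _ => (q : ℝ)) n ω = birkhoffSum T g n ω - n * q := by
      simp [birkhoffSum]
    linarith [hC n]
  · exact .of_forall fun _ h => absurd h hq

/-- Birkhoff's pointwise ergodic theorem. -/
theorem ae_tendsto_birkhoffSum_div [IsProbabilityMeasure μ] (hT : Ergodic T μ)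
    (hgm : Measurable g) (hg : Integrable g μ) :
    ∀ᵐ ω ∂μ, Tendsto (fun n => birkhoffSum T g n ω / n) atTop (𝓝 (∫ ω, g ω ∂μ)) := by
  filter_upwards [ae_forall_rat_gt_birkhoffSum_le hT hgm hg,
    ae_forall_rat_gt_birkhoffSum_le hT hgm.neg hg.neg] with ω hup hlow
  refine tendsto_order.2 ⟨fun a ha => ?_, fun a ha => eventually_div_lt_of_forall_rat_gt hup ha⟩
  simp only [Pi.neg_apply, integral_neg] at hlow
  filter_upwards [eventually_div_lt_of_forall_rat_gt hlow (neg_lt_neg ha)] with n hn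
  rw [birkhoffSum_neg, neg_div] at hn
  exact neg_lt_neg_iff.1 hn

end Birkhoff

lemma tendsto_sum_integral_div_of_ae {Ω : Type*} [MeasurableSpace Ω] {μ : Measure Ω}
    [IsProbabilityMeasure μ] {f : ℕ → Ω → ℝ} {C l : ℝ}
    (hf : ∀ t, Measurable (f t)) (hC : ∀ t ω, ‖f t ω‖ ≤ C)
    (h : ∀ᵐ ω ∂μ, Tendsto (fun n => (∑ t ∈ range n, f t ω) / n) atTop (𝓝 l)) :
    Tendsto (fun n => (∑ t ∈ range n, ∫ ω, f t ω ∂μ) / n) atTop (𝓝 l) := by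
  have hbound : ∀ n ω, ‖(∑ t ∈ range n, f t ω) / n‖ ≤ C := by
    intro n ω
    rcases n.eq_zero_or_pos with rfl | hn
    · simpa using (norm_nonneg _).trans (hC 0 ω)
    rw [norm_div, Real.norm_natCast, div_le_iff₀ (by exact_mod_cast hn)]
    calc ‖∑ t ∈ range n, f t ω‖ ≤ ∑ t ∈ range n, ‖f t ω‖ := norm_sum_le _ _
      _ ≤ ∑ t ∈ range n, C := sum_le_sum fun t _ => hC t ω
      _ = C * n := by simp [mul_comm]
  have hint : ∀ t, Integrable (f t) μ := fun t =>
    .of_bound (hf t).aestronglyMeasurable C (.of_forall (hC t))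
  have hlim := tendsto_integral_of_dominated_convergence (fun _ => C)
    (fun n => ((Finset.measurable_sum _ fun t _ => hf t).div_const _).aestronglyMeasurable)
    (integrable_const C) (fun n => .of_forall (hbound n)) h
  rw [integral_const, probReal_univ, one_smul] at hlim
  refine hlim.congr fun n => ?_
  rw [integral_div, integral_finsetSum _ fun t _ => hint t]

section Queue

variable {p : ℝ} {x u : ℕ → ℝ} {c : ℕ → Prop} [DecidablePred c]

lemma queue_eq_sum_sub_mul_count (hu0 : u 0 = 0)
    (hu : ∀ t, u (t + 1) = u t - (if c t then p else 0) + x t) (n : ℕ) :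
    u n = ∑ t ∈ range n, x t - p * ∑ t ∈ range n, if c t then 1 else 0 := by
  induction n with
  | zero => simp [hu0]
  | succ n ih => rw [hu, ih, sum_range_succ, sum_range_succ]; split_ifs <;> ring

lemma queue_nonneg (hx : ∀ t, 0 ≤ x t) (hu0 : u 0 = 0)
    (hu : ∀ t, u (t + 1) = u t - (if c t then p else 0) + x t) (hc : ∀ t, c t → p ≤ u t) :
    ∀ n, 0 ≤ u n
  | 0 => hu0.ge
  | n + 1 => by
    rw [hu]
    split_ifs with h
    · linarith [hc n h, hx n]
    · linarith [hx n, queue_nonneg hx hu0 hu hc n]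

end Queue

structure IsJointThresholdPolicy (p q : ℝ) (x y u v : ℕ → ℝ) : Prop where
  u_zero : u 0 = 0
  v_zero : v 0 = 0
  u_succ t : u (t + 1) = u t - (if p ≤ u t ∧ q ≤ v t then p else 0) + x t
  v_succ t : v (t + 1) = v t - (if p ≤ u t ∧ q ≤ v t then q else 0) + y t

noncomputable def jointCount (p q : ℝ) (u v : ℕ → ℝ) (n : ℕ) : ℝ :=
  ∑ t ∈ range n, if p ≤ u t ∧ q ≤ v t then 1 else 0

lemma jointCount_nonneg (p q : ℝ) (u v : ℕ → ℝ) (n : ℕ) : 0 ≤ jointCount p q u v n :=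
  sum_nonneg fun _ _ => by split_ifs <;> norm_num

lemma jointCount_le (p q : ℝ) (u v : ℕ → ℝ) (n : ℕ) : jointCount p q u v n ≤ n := by
  rw [jointCount, sum_boole]
  exact_mod_cast (card_filter_le _ _).trans (card_range n).le

namespace IsJointThresholdPolicy

variable {p q : ℝ} {x y u v : ℕ → ℝ}

lemma u_eq (h : IsJointThresholdPolicy p q x y u v) (n : ℕ) :
    u n = ∑ t ∈ range n, x t - p * jointCount p q u v n :=
  queue_eq_sum_sub_mul_count h.u_zero h.u_succ n

lemma v_eq (h : IsJointThresholdPolicy p q x y u v) (n : ℕ) :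
    v n = ∑ t ∈ range n, y t - q * jointCount p q u v n :=
  queue_eq_sum_sub_mul_count h.v_zero h.v_succ n

lemma jointCount_le_min (h : IsJointThresholdPolicy p q x y u v) (hx : ∀ t, 0 ≤ x t)
    (hy : ∀ t, 0 ≤ y t) (hp : 0 < p) (hq : 0 < q) (n : ℕ) :
    jointCount p q u v n ≤ min ((∑ t ∈ range n, x t) / p) ((∑ t ∈ range n, y t) / q) := by
  have hu := queue_nonneg hx h.u_zero h.u_succ (fun t ht => ht.1) n
  have hv := queue_nonneg hy h.v_zero h.v_succ (fun t ht => ht.2) n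
  rw [h.u_eq] at hu
  rw [h.v_eq] at hv
  exact le_min ((le_div_iff₀ hp).2 (by linarith)) ((le_div_iff₀ hq).2 (by linarith))

lemma exists_le_jointCount_add_two (h : IsJointThresholdPolicy p q x y u v) (hp : 0 < p)
    (hq : 0 < q) (n : ℕ) : ∃ b ≤ n,
      min ((∑ t ∈ range b, x t) / p) ((∑ t ∈ range b, y t) / q) + (n - b) ≤
        jointCount p q u v n + 2 := by
  induction n with
  | zero => exact ⟨0, le_rfl, by simp [jointCount]⟩
  | succ n ih =>
    by_cases hserve : p ≤ u n ∧ q ≤ v n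
    · obtain ⟨b, hbn, hb⟩ := ih
      refine ⟨b, hbn.trans n.le_succ, ?_⟩
      rw [jointCount, sum_range_succ, if_pos hserve, ← jointCount]
      push_cast
      linarith
    · refine ⟨n, n.le_succ, ?_⟩
      rw [jointCount, sum_range_succ, if_neg hserve, ← jointCount]
      push_cast
      rcases not_and_or.1 hserve with hu | hv
      · rw [not_le, h.u_eq] at hu
        have : (∑ t ∈ range n, x t) / p < jointCount p q u v n + 1 := by
          rw [div_lt_iff₀ hp]; linarith
        linarith [min_le_left ((∑ t ∈ range n, x t) / p) ((∑ t ∈ range n, y t) / q)]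
      · rw [not_le, h.v_eq] at hv
        have : (∑ t ∈ range n, y t) / q < jointCount p q u v n + 1 := by
          rw [div_lt_iff₀ hq]; linarith
        linarith [min_le_right ((∑ t ∈ range n, x t) / p) ((∑ t ∈ range n, y t) / q)]

theorem tendsto_jointCount_div (h : IsJointThresholdPolicy p q x y u v) (hx : ∀ t, 0 ≤ x t)
    (hy : ∀ t, 0 ≤ y t) (hp : 0 < p) (hq : 0 < q) {a b : ℝ}
    (ha : Tendsto (fun n => (∑ t ∈ range n, x t) / n) atTop (𝓝 a))
    (hb : Tendsto (fun n => (∑ t ∈ range n, y t) / n) atTop (𝓝 b)) :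
    Tendsto (fun n => jointCount p q u v n / n) atTop (𝓝 (min 1 (min (a / p) (b / q)))) := by
  refine tendsto_div_min_one_of_reflection_bound ?_ (jointCount_nonneg p q u v)
    (jointCount_le p q u v) (h.jointCount_le_min hx hy hp hq) (h.exists_le_jointCount_add_two hp hq)
  refine ((ha.div_const p).min (hb.div_const q)).congr fun n => ?_
  simp only [min_div_div_right n.cast_nonneg, div_right_comm]

end IsJointThresholdPolicy

section Measurability

variable {Ω : Type*} [MeasurableSpace Ω] {p q : ℝ}

lemma measurable_ite_le_and_le {f g : Ω → ℝ} (hf : Measurable f) (hg : Measurable g) (a b : ℝ) :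
    Measurable fun ω => if p ≤ f ω ∧ q ≤ g ω then a else b :=
  .ite ((measurableSet_le measurable_const hf).inter (measurableSet_le measurable_const hg))
    measurable_const measurable_const

lemma IsJointThresholdPolicy.measurable {x y u v : ℕ → Ω → ℝ}
    (h : ∀ ω, IsJointThresholdPolicy p q (x · ω) (y · ω) (u · ω) (v · ω))
    (hx : ∀ t, Measurable (x t)) (hy : ∀ t, Measurable (y t)) :
    ∀ t, Measurable (u t) ∧ Measurable (v t)
  | 0 => by
    simp only [funext fun ω => (h ω).u_zero, funext fun ω => (h ω).v_zero]
    exact ⟨measurable_const, measurable_const⟩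
  | t + 1 => by
    obtain ⟨hu, hv⟩ := IsJointThresholdPolicy.measurable h hx hy t
    simp only [funext fun ω => (h ω).u_succ t, funext fun ω => (h ω).v_succ t]
    exact ⟨(hu.sub (measurable_ite_le_and_le hu hv _ _)).add (hx t),
      (hv.sub (measurable_ite_le_and_le hu hv _ _)).add (hy t)⟩

end Measurability

/-- Proposition 1: Under the joint threshold policy with
infinite batteries and stationary ergodic arrivals (means λ_S, λ_D), the
simultaneous transmit-and-receive probability Ψ satisfies
Ψ ≤ min(λ_S/P_S, λ_D/P_D), with equality if max(λ_S/P_S, λ_D/P_D) < 1. -/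
theorem stmt12 {Ω : Type*} [MeasurableSpace Ω] (μ : Measure Ω)
    [IsProbabilityMeasure μ]
    (T : Ω → Ω) (hT : Ergodic T μ)
    (ES0 ED0 : Ω → ℝ)
    (hESmeas : Measurable ES0) (hEDmeas : Measurable ED0)
    (hESnonneg : ∀ ω, 0 ≤ ES0 ω) (hEDnonneg : ∀ ω, 0 ≤ ED0 ω)
    (hESint : Integrable ES0 μ) (hEDint : Integrable ED0 μ)
    (lamS lamD : ℝ)
    (hlamS : ∫ ω, ES0 ω ∂μ = lamS) (hlamD : ∫ ω, ED0 ω ∂μ = lamD)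
    (PS PD : ℝ) (hPS : 0 < PS) (hPD : 0 < PD)
    (BS BD : ℕ → Ω → ℝ)
    (hBS1 : ∀ ω, BS 1 ω = 0) (hBD1 : ∀ ω, BD 1 ω = 0)
    (hBSrec : ∀ t, 1 ≤ t → ∀ ω, BS (t + 1) ω =
      BS t ω - (if PS ≤ BS t ω ∧ PD ≤ BD t ω then PS else 0) + ES0 (T^[t] ω))
    (hBDrec : ∀ t, 1 ≤ t → ∀ ω, BD (t + 1) ω =
      BD t ω - (if PS ≤ BS t ω ∧ PD ≤ BD t ω then PD else 0) + ED0 (T^[t] ω)) :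
    ∃ Psi : ℝ,
      Tendsto
        (fun n : ℕ => (1 / (n : ℝ)) * ∑ t ∈ Finset.Icc 1 n,
          ∫ ω, (if PS ≤ BS t ω ∧ PD ≤ BD t ω then (1 : ℝ) else 0) ∂μ)
        atTop (nhds Psi) ∧
      Psi ≤ min (lamS / PS) (lamD / PD) ∧
      (max (lamS / PS) (lamD / PD) < 1 → Psi = min (lamS / PS) (lamD / PD)) := by
  -- Slot `t + 1` of `BS`, `BD` is slot `t` of the policy, fed along the orbit of `T ω`.
  have hpolicy : ∀ ω, IsJointThresholdPolicy PS PD (fun t => ES0 (T^[t] (T ω)))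
      (fun t => ED0 (T^[t] (T ω))) (fun t => BS (t + 1) ω) (fun t => BD (t + 1) ω) := fun ω =>
    { u_zero := hBS1 ω, v_zero := hBD1 ω
      u_succ := fun t => hBSrec (t + 1) (by omega) ω
      v_succ := fun t => hBDrec (t + 1) (by omega) ω }
  have hmeas := IsJointThresholdPolicy.measurable hpolicy
    (fun t => hESmeas.comp ((hT.measurable.iterate t).comp hT.measurable))
    (fun t => hEDmeas.comp ((hT.measurable.iterate t).comp hT.measurable))
  have hpath : ∀ᵐ ω ∂μ, Tendsto
      (fun n => jointCount PS PD (fun t => BS (t + 1) ω) (fun t => BD (t + 1) ω) n / n) atTop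
      (𝓝 (min 1 (min (lamS / PS) (lamD / PD)))) := by
    have hQ := hT.toMeasurePreserving.quasiMeasurePreserving
    filter_upwards [hQ.ae (ae_tendsto_birkhoffSum_div hT hESmeas hESint),
      hQ.ae (ae_tendsto_birkhoffSum_div hT hEDmeas hEDint)] with ω hS hD
    exact (hpolicy ω).tendsto_jointCount_div (fun _ => hESnonneg _) (fun _ => hEDnonneg _)
      hPS hPD (hlamS ▸ hS) (hlamD ▸ hD)
  have hmean := tendsto_sum_integral_div_of_ae (C := 1)
    (fun t => measurable_ite_le_and_le (hmeas t).1 (hmeas t).2 1 0)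
    (fun t ω => by split_ifs <;> norm_num) hpath
  refine ⟨_, hmean.congr fun n => ?_, min_le_right _ _,
    fun h => min_eq_right (min_le_max.trans h.le)⟩
  rw [← Ico_add_one_right_eq_Icc, sum_Ico_eq_sum_range, add_tsub_cancel_right, one_div_mul_eq_div]
  simp only [add_comm 1]
end

section
/- Let c > 0, P_{C,S} ≥ 0, λ_S, λ_D, P_D > 0. The function φ(P_S) = exp(-c/(P_S - P_{C,S})) · min(1, λ_S/P_S, λ_D/P_D), defined for P_S > P_{C,S}, is maximized at P_S* = max(λ_S, B_th, λ_S P_D/λ_D), where B_th = (1/2)[(2P_{C,S} + c) + c^{1/2}(4P_{C,S} + c)^{1/2}]. -/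
/-!
With `M = max λ_S (λ_S P_D / λ_D)` one has `min(1, λ_S/P, λ_D/P_D) = λ_S / max(P, M)`, so
`φ(P) = λ_S e^{-c/(P - P_{C,S})} / max(P, M) ≤ λ_S u(max(P, M))` for
`u(x) = e^{-c/(x - P_{C,S})} / x`, the exponential factor being increasing.
The derivative of `u` has the sign of `c x - (x - P_{C,S})²`, whose larger root is `B_th`;
so `u` increases up to `B_th` and decreases after it, and on `[M, ∞)` it peaks at `max(M, B_th)`.
-/

open Real Set

lemma div_max_eq_min_div {α : Type*} [Field α] [LinearOrder α] [IsStrictOrderedRing α]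
    {a b c : α} (ha : 0 ≤ a) (hb : 0 < b) (hc : 0 < c) :
    a / max b c = min (a / b) (a / c) := by
  rcases le_total b c with h | h
  · rw [max_eq_right h, min_eq_right (div_le_div_of_nonneg_left ha hb h)]
  · rw [max_eq_left h, min_eq_left (div_le_div_of_nonneg_left ha hc h)]

lemma MonotoneOn.le_apply_max_of_antitoneOn {α β : Type*} [LinearOrder α] [Preorder β]
    {f : α → β} {a b m x : α} (hmono : MonotoneOn f (Ioc a b)) (hanti : AntitoneOn f (Ici b))
    (hax : a < x) (hmx : m ≤ x) : f x ≤ f (max m b) := by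
  rcases le_total x b with hxb | hbx
  · rw [max_eq_right (hmx.trans hxb)]
    exact hmono ⟨hax, hxb⟩ ⟨hax.trans_le hxb, le_rfl⟩ hxb
  · exact hanti (le_max_right m b) hbx (max_le hmx hbx)

/-- The larger root of `(x - a) ^ 2 = c * x`. -/
noncomputable def upperRoot (a c : ℝ) : ℝ := (2 * a + c + √c * √(4 * a + c)) / 2

section upperRoot

variable {a c : ℝ}

lemma mul_sub_sub_sq_eq (ha : 0 ≤ a) (hc : 0 ≤ c) (x : ℝ) :
    c * x - (x - a) ^ 2 = (upperRoot a c - x) * (x - (2 * a + c - upperRoot a c)) := by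
  have hsq : (√c * √(4 * a + c)) ^ 2 = c * (4 * a + c) := by
    rw [mul_pow, sq_sqrt hc, sq_sqrt (by positivity)]
  unfold upperRoot
  linear_combination (-1 / 4 : ℝ) * hsq

lemma add_le_upperRoot (ha : 0 ≤ a) (hc : 0 ≤ c) : a + c ≤ upperRoot a c := by
  have hc_le : c ≤ √c * √(4 * a + c) := by
    rw [← sqrt_mul hc]
    exact le_sqrt_of_sq_le (by nlinarith)
  unfold upperRoot; linarith

lemma lt_upperRoot (ha : 0 ≤ a) (hc : 0 < c) : a < upperRoot a c := by
  linarith [add_le_upperRoot ha hc.le]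

lemma mul_sub_sub_sq_nonneg (ha : 0 ≤ a) (hc : 0 ≤ c) {x : ℝ} (hax : a < x)
    (hx : x ≤ upperRoot a c) : 0 ≤ c * x - (x - a) ^ 2 := by
  rw [mul_sub_sub_sq_eq ha hc]
  have := add_le_upperRoot ha hc
  apply mul_nonneg <;> linarith

lemma mul_sub_sub_sq_nonpos (ha : 0 ≤ a) (hc : 0 ≤ c) {x : ℝ} (hax : a < x)
    (hx : upperRoot a c ≤ x) : c * x - (x - a) ^ 2 ≤ 0 := by
  rw [mul_sub_sub_sq_eq ha hc]
  have := add_le_upperRoot ha hc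
  apply mul_nonpos_of_nonpos_of_nonneg <;> linarith

end upperRoot

lemma hasDerivAt_exp_neg_div_sub_div {a c x : ℝ} (hxa : x ≠ a) (hx : x ≠ 0) :
    HasDerivAt (fun y => exp (-c / (y - a)) / y)
      (exp (-c / (x - a)) * (c * x - (x - a) ^ 2) / ((x - a) ^ 2 * x ^ 2)) x := by
  have hxa' : x - a ≠ 0 := sub_ne_zero.2 hxa
  have hexp : HasDerivAt (fun y => exp (-c / (y - a)))
      (exp (-c / (x - a)) * (c / (x - a) ^ 2)) x := by
    have := (((hasDerivAt_id' x).sub_const a).inv hxa').const_mul (-c)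
    simp only [div_eq_mul_inv]
    exact this.exp.congr_deriv (by simp only [Pi.inv_apply, neg_mul, mul_neg]; ring)
  exact (hexp.div (hasDerivAt_id' x) hx).congr_deriv (by field_simp)

section expNegDivSubDiv

variable {a c : ℝ}

lemma hasDerivAt_exp_neg_div_sub_div_of_lt (ha : 0 ≤ a) {x : ℝ} (hx : a < x) :
    HasDerivAt (fun y => exp (-c / (y - a)) / y)
      (exp (-c / (x - a)) * (c * x - (x - a) ^ 2) / ((x - a) ^ 2 * x ^ 2)) x :=
  hasDerivAt_exp_neg_div_sub_div hx.ne' (ha.trans_lt hx).ne'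

lemma continuousOn_exp_neg_div_sub_div (ha : 0 ≤ a) :
    ContinuousOn (fun y => exp (-c / (y - a)) / y) (Ioi a) := fun _ hx =>
  (hasDerivAt_exp_neg_div_sub_div_of_lt ha hx).continuousAt.continuousWithinAt

lemma monotoneOn_exp_neg_div_sub_div (ha : 0 ≤ a) (hc : 0 ≤ c) :
    MonotoneOn (fun y => exp (-c / (y - a)) / y) (Ioc a (upperRoot a c)) := by
  refine monotoneOn_of_hasDerivWithinAt_nonneg (convex_Ioc _ _)
    ((continuousOn_exp_neg_div_sub_div ha).mono Ioc_subset_Ioi_self)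
    (fun x hx => (hasDerivAt_exp_neg_div_sub_div_of_lt ha ?_).hasDerivWithinAt) fun x hx => ?_
  · rw [interior_Ioc] at hx; exact hx.1
  · rw [interior_Ioc] at hx
    have := mul_sub_sub_sq_nonneg ha hc hx.1 hx.2.le
    positivity

lemma antitoneOn_exp_neg_div_sub_div (ha : 0 ≤ a) (hc : 0 < c) :
    AntitoneOn (fun y => exp (-c / (y - a)) / y) (Ici (upperRoot a c)) := by
  have hlt : a < upperRoot a c := lt_upperRoot ha hc
  refine antitoneOn_of_hasDerivWithinAt_nonpos (convex_Ici _)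
    ((continuousOn_exp_neg_div_sub_div ha).mono (Ici_subset_Ioi.2 hlt))
    (fun x hx => (hasDerivAt_exp_neg_div_sub_div_of_lt ha ?_).hasDerivWithinAt) fun x hx => ?_
  · rw [interior_Ici] at hx; exact hlt.trans hx
  · rw [interior_Ici] at hx
    have := mul_sub_sub_sq_nonpos ha hc.le (hlt.trans hx) hx.le
    exact div_nonpos_of_nonpos_of_nonneg
      (mul_nonpos_of_nonneg_of_nonpos (exp_pos _).le this) (by positivity)

lemma monotoneOn_exp_neg_div_sub (hc : 0 ≤ c) :
    MonotoneOn (fun y => exp (-c / (y - a))) (Ioi a) := fun x hx y _ hxy => by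
  simp only [neg_div, exp_le_exp, neg_le_neg_iff]
  exact div_le_div_of_nonneg_left hc (sub_pos.2 hx) (by linarith)

end expNegDivSubDiv

lemma min_min_one_div_div_eq_div_max {a b d x : ℝ} (ha : 0 < a) (hb : 0 < b) (hd : 0 < d)
    (hx : 0 < x) : min (min 1 (a / x)) (b / d) = a / max x (max a (a * d / b)) := by
  rw [div_max_eq_min_div ha.le hx (by positivity), div_max_eq_min_div ha.le ha (by positivity),
    div_self ha.ne', div_div_eq_mul_div, mul_div_mul_left _ _ ha.ne']
  ac_rfl

/-- Theorem 4: φ(P_S) = exp(-c/(P_S-Pcs))·min(1, λ_S/P_S,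
λ_D/P_D) is maximized over P_S > Pcs at
P_S* = max(λ_S, B_th, λ_S·P_D/λ_D). -/
theorem stmt13 (c Pcs lamS lamD PD : ℝ)
    (hc : 0 < c) (hPcs : 0 ≤ Pcs) (hlS : 0 < lamS) (hlD : 0 < lamD)
    (hPD : 0 < PD)
    (phi : ℝ → ℝ)
    (hphi : ∀ P : ℝ, Pcs < P → phi P = Real.exp (-c / (P - Pcs)) *
      min (min 1 (lamS / P)) (lamD / PD))
    (Bth : ℝ)
    (hBth : Bth = ((2 * Pcs + c) + Real.sqrt c * Real.sqrt (4 * Pcs + c)) / 2) :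
    Pcs < max (max lamS Bth) (lamS * PD / lamD) ∧
    ∀ P : ℝ, Pcs < P → phi P ≤ phi (max (max lamS Bth) (lamS * PD / lamD)) := by
  obtain rfl : Bth = upperRoot Pcs c := hBth
  set M := max lamS (lamS * PD / lamD)
  have hPcsB : Pcs < upperRoot Pcs c := lt_upperRoot hPcs hc
  have hphi' : ∀ P, Pcs < P → phi P = lamS * (exp (-c / (P - Pcs)) / max P M) := fun P hP => by
    rw [hphi P hP, min_min_one_div_div_eq_div_max hlS hlD hPD (hPcs.trans_lt hP)]
    ring
  rw [max_right_comm]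
  refine ⟨hPcsB.trans_le (le_max_right _ _), fun P hP => ?_⟩
  have hPM : Pcs < max P M := hP.trans_le (le_max_left _ _)
  calc phi P = lamS * (exp (-c / (P - Pcs)) / max P M) := hphi' P hP
    _ ≤ lamS * (exp (-c / (max P M - Pcs)) / max P M) := by
      gcongr ?_ * (?_ / _)
      exact monotoneOn_exp_neg_div_sub hc.le hP hPM (le_max_left _ _)
    _ ≤ lamS * (exp (-c / (max M (upperRoot Pcs c) - Pcs)) / max M (upperRoot Pcs c)) := by
      gcongr ?_ * ?_
      exact (monotoneOn_exp_neg_div_sub_div hPcs hc.le).le_apply_max_of_antitoneOn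
        (antitoneOn_exp_neg_div_sub_div hPcs hc) hPM (le_max_right _ _)
    _ = phi (max M (upperRoot Pcs c)) := by
      rw [hphi' _ (hPcsB.trans_le (le_max_right _ _)), max_eq_left (le_max_left _ _)]
end

section
/- Fix Ψ_S ∈ [0,1], ξ, η ∈ (0,1], P_F > 0, λ_D > 0, and p ∈ [0,1). Let D = 1 - (1-ξη)(1-Ψ_S) - (1-η)p·Ψ_S. Then D > 0, and the unique solution Ψ_D ∈ [0,1] of Ψ_D = min(1, (λ_D + (1-ξη)P_F(1-Ψ_S)Ψ_D + (1-η)P_F p Ψ_S Ψ_D)/P_F) is Ψ_D = min(1, λ_D/(D·P_F)). -/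
/-- Proposition 3, receiver detection and processing:
D = 1 - (1-ξη)(1-Ψ_S) - (1-η)pΨ_S > 0, and the unique solution Ψ_D ∈ [0,1] of
Ψ_D = min(1, (λ_D + (1-ξη)P_F(1-Ψ_S)Ψ_D + (1-η)P_F p Ψ_S Ψ_D)/P_F) is
Ψ_D = min(1, λ_D/(D·P_F)). -/
theorem stmt15 (PsiS xi eta PF lamD p : ℝ)
    (hPsiS : PsiS ∈ Set.Icc (0 : ℝ) 1)
    (hxi : xi ∈ Set.Ioc (0 : ℝ) 1) (heta : eta ∈ Set.Ioc (0 : ℝ) 1)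
    (hPF : 0 < PF) (hlD : 0 < lamD) (hp : p ∈ Set.Ico (0 : ℝ) 1)
    (D : ℝ) (hD : D = 1 - (1 - xi * eta) * (1 - PsiS) - (1 - eta) * p * PsiS) :
    0 < D ∧
    ∀ PsiD ∈ Set.Icc (0 : ℝ) 1,
      (PsiD = min 1 ((lamD + (1 - xi * eta) * PF * (1 - PsiS) * PsiD +
          (1 - eta) * PF * p * PsiS * PsiD) / PF) ↔
        PsiD = min 1 (lamD / (D * PF))) := by
  obtain ⟨hS0, hS1⟩ := hPsiS
  obtain ⟨hx0, hx1⟩ := hxi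
  obtain ⟨he0, he1⟩ := heta
  obtain ⟨hp0, hp1⟩ := hp
  have hxe : 0 < xi * eta := mul_pos hx0 he0
  have hxe1 : xi * eta ≤ 1 := by nlinarith
  have hep : (1 - eta) * p < 1 := by nlinarith
  have hep0 : 0 ≤ (1 - eta) * p := mul_nonneg (by linarith) hp0
  have hD0 : 0 < D := by
    rw [hD]
    nlinarith [mul_nonneg hxe.le (sub_nonneg.mpr hS1),
      mul_nonneg (sub_pos.mpr hep).le hS0, mul_pos hxe (sub_pos.mpr hep),
      sub_pos.mpr hep]
  have hD1 : D ≤ 1 := by rw [hD]; nlinarith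
  have hDPF : 0 < D * PF := mul_pos hD0 hPF
  refine ⟨hD0, fun PsiD hPsiD => ?_⟩
  obtain ⟨hd0, hd1⟩ := hPsiD
  have hrw : (lamD + (1 - xi * eta) * PF * (1 - PsiS) * PsiD +
      (1 - eta) * PF * p * PsiS * PsiD) / PF = lamD / PF + (1 - D) * PsiD := by
    rw [hD]; field_simp; ring
  rw [hrw]
  constructor
  · intro h
    rcases le_or_gt 1 (lamD / PF + (1 - D) * PsiD) with hge | hlt
    · have hP1 : PsiD = 1 := by rw [h, min_eq_left hge]
      have h1 : 1 ≤ lamD / (D * PF) := by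
        rw [le_div_iff₀ hDPF]
        have := (le_div_iff₀ hPF).mp (by linarith [hge, hP1 ▸ hge] :
          (1 : ℝ) - (1 - D) * PsiD ≤ lamD / PF)
        nlinarith [hP1]
      rw [hP1, min_eq_left h1]
    · have hmin : min 1 (lamD / PF + (1 - D) * PsiD) = lamD / PF + (1 - D) * PsiD :=
        min_eq_right hlt.le
      rw [hmin] at h
      have h' : lamD / PF = D * PsiD := by linarith
      have h'' : lamD = D * PsiD * PF := (div_eq_iff hPF.ne').mp h'
      have heq : PsiD = lamD / (D * PF) := by
        rw [eq_div_iff hDPF.ne']; linarith [h'']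
      have hlt1 : lamD / (D * PF) < 1 := by
        rw [← heq]; linarith
      rw [heq, min_eq_right hlt1.le]
  · intro h
    rcases le_or_gt 1 (lamD / (D * PF)) with hge | hlt
    · have hP1 : PsiD = 1 := by rw [h, min_eq_left hge]
      have hDl : D ≤ lamD / PF := (le_div_iff₀ hPF).mpr ((one_le_div hDPF).mp hge)
      rw [hP1]
      symm
      exact min_eq_left (by linarith)
    · have heq : PsiD = lamD / (D * PF) := by rw [h, min_eq_right hlt.le]
      have hlam : lamD = PsiD * (D * PF) := by
        rw [heq]; field_simp
      have h2 : lamD / PF + (1 - D) * PsiD = PsiD := by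
        rw [hlam]; field_simp; ring
      have h3 : PsiD < 1 := heq ▸ hlt
      rw [h2, min_eq_right h3.le]
end

section
/- Fix P_S > 0, P_D > 0, λ_S, λ_D > 0 and p ∈ [0,1) the channel outage probability. If the receiver knows the transmitter's threshold policy and the CSI, the receiving probability satisfies the fixed point Ψ_D = min(1, (λ_D + p·P_D·Ψ_D)/P_D), giving Ψ_D = min(1, λ_D/((1-p)P_D)); consequently, with independent EH processes, Ψ(P_S, P_D) = min(1, λ_S/P_S, λ_D/((1-p)P_D), λ_S λ_D/((1-p) P_S P_D)). -/
/-- Corollary 1: with the receiver knowing the transmitter's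
threshold policy and the CSI, the fixed point Ψ_D = min(1, (λ_D + pP_DΨ_D)/P_D)
gives Ψ_D = min(1, λ_D/((1-p)P_D)); consequently, with independent EH
processes, Ψ(P_S,P_D) = min(1, λ_S/P_S, λ_D/((1-p)P_D), λ_Sλ_D/((1-p)P_SP_D)). -/
theorem stmt16 (PS PD lamS lamD p : ℝ)
    (hPS : 0 < PS) (hPD : 0 < PD) (hlS : 0 < lamS) (hlD : 0 < lamD)
    (hp : p ∈ Set.Ico (0 : ℝ) 1) :
    (∀ PsiD : ℝ, PsiD = min 1 ((lamD + p * PD * PsiD) / PD) →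
      PsiD = min 1 (lamD / ((1 - p) * PD))) ∧
    min 1 (lamS / PS) * min 1 (lamD / ((1 - p) * PD)) =
      min (min 1 (lamS / PS))
        (min (lamD / ((1 - p) * PD)) (lamS * lamD / ((1 - p) * PS * PD))) := by
  obtain ⟨hp0, hp1⟩ := hp
  have h1p : (0:ℝ) < 1 - p := by linarith
  have hdenom : (0:ℝ) < (1 - p) * PD := by positivity
  constructor
  · intro PsiD hfix
    rcases min_cases 1 ((lamD + p * PD * PsiD) / PD) with ⟨hm, hle⟩ | ⟨hm, hlt⟩
    · -- PsiD = 1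
      have hP1 : PsiD = 1 := hfix.trans hm
      subst hP1
      have : 1 ≤ (lamD + p * PD * 1) / PD := hle
      have h2 : PD ≤ lamD + p * PD := by
        have := (le_div_iff₀ hPD).mp this
        linarith
      have hb : 1 ≤ lamD / ((1 - p) * PD) := by
        rw [le_div_iff₀ hdenom]; nlinarith
      rw [min_eq_left hb]
    · -- PsiD = (lamD + p PD PsiD)/PD
      have hP : PsiD = (lamD + p * PD * PsiD) / PD := hfix.trans hm
      have hPle1 : PsiD ≤ 1 := by rw [hfix]; exact min_le_left _ _
      have heq : PsiD * PD = lamD + p * PD * PsiD := by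
        field_simp at hP; linarith [hP]
      have hb : PsiD = lamD / ((1 - p) * PD) := by
        field_simp; nlinarith
      rw [hb] at hPle1 ⊢
      rw [min_eq_right hPle1]
  · set a := lamS / PS with ha
    set b := lamD / ((1 - p) * PD) with hb
    have hab : a * b = lamS * lamD / ((1 - p) * PS * PD) := by
      rw [ha, hb]; field_simp
    have ha0 : 0 < a := by positivity
    have hb0 : 0 < b := by positivity
    rw [← hab]
    rcases le_total a 1 with h1 | h1 <;> rcases le_total b 1 with h2 | h2
    · have hab1 : a * b ≤ a := by nlinarith
      have hab2 : a * b ≤ b := by nlinarith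
      rw [min_eq_right h1, min_eq_right h2, min_eq_right hab2, min_eq_right hab1]
    · have h1b : (1:ℝ) ≤ b := h2
      have hab1 : a ≤ a * b := by nlinarith
      have hab' : a ≤ b := h1.trans h1b
      rw [min_eq_right h1, min_eq_left h1b, mul_one, min_eq_left (le_min hab' hab1)]
    · have h1a : (1:ℝ) ≤ a := h1
      have hab2 : b ≤ a * b := by nlinarith
      rw [min_eq_left h1a, min_eq_right h2, one_mul, min_eq_left hab2, min_eq_right h2]
    · have h1a : (1:ℝ) ≤ a := h1
      have h1b : (1:ℝ) ≤ b := h2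
      have hab1 : (1:ℝ) ≤ a * b := by nlinarith
      rw [min_eq_left h1a, min_eq_left h1b, one_mul, min_eq_left (le_min h1b hab1)]
end
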